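/- arXiv:2502.01416 — 2 statements merged into one kernel-verified Lean document; each statement's English description precedes it below -/
import Mathlib

section
/- Let X be a nonempty finite set, N ≥ 1, let q^ref be a Markov process on X^{N+2} with full support, and let q be a process on X^{N+2} reciprocal with respect to q^ref whose endpoint coupling q(x_0, x_1) has full support. Then for every n ∈ {1, …, N+1} and all states y, z, x_1 ∈ X, the conditional transition of q given the endpoint matches that of the reference bridge: q(x_{t_n} = z | x_{t_{n-1}} = y, x_1) = q^ref(x_{t_n} = z | x_{t_{n-1}} = y, x_1) (with the conventions x_{t_0} := x_0 and x_{t_{N+1}} := x_1). -/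
open Finset

/-- A probability mass function on a finite type. -/
def IsPMF {Z : Type*} [Fintype Z] (p : Z → ℝ) : Prop :=
  (∀ z, 0 ≤ p z) ∧ ∑ z, p z = 1

/-- KL divergence between two pmfs on a finite type (with `0 log 0 := 0`,
which is automatic since `0 * log (0/b) = 0`). -/
noncomputable def KLd {Z : Type*} [Fintype Z] (a b : Z → ℝ) : ℝ :=
  ∑ z, a z * Real.log (a z / b z)

/-- Trajectories with `N` intermediate time steps: indices `0, 1, …, N+1`,
where index `0` is time `0` and index `N+1` is time `1`. -/
abbrev Traj (X : Type*) (N : ℕ) := Fin (N + 2) → X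

variable {X : Type*} [Fintype X] [DecidableEq X] {N : ℕ}

/-- One-time marginal of a process at time index `i`. -/
noncomputable def timeMarg (q : Traj X N → ℝ) (i : Fin (N + 2)) (x : X) : ℝ :=
  ∑ ω : Traj X N, if ω i = x then q ω else 0

/-- Joint marginal of the endpoints `(x_0, x_1)`. -/
noncomputable def endMarg (q : Traj X N → ℝ) (a b : X) : ℝ :=
  ∑ ω : Traj X N, if ω 0 = a ∧ ω (Fin.last (N + 1)) = b then q ω else 0

/-- Joint marginal at the neighboring time indices `n` and `n+1`. -/
noncomputable def pairMarg (q : Traj X N → ℝ) (n : Fin (N + 1)) (y z : X) : ℝ :=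
  ∑ ω : Traj X N, if ω n.castSucc = y ∧ ω n.succ = z then q ω else 0

/-- Transition probability `q(x_{t_n} = z | x_{t_{n-1}} = y)` for the step from
time index `n` to `n+1`. -/
noncomputable def transP (q : Traj X N → ℝ) (n : Fin (N + 1)) (y z : X) : ℝ :=
  pairMarg q n y z / timeMarg q n.castSucc y

/-- Glue endpoints `a`, `b` and inner states `v` into a trajectory. -/
def glue (a : X) (v : Fin N → X) (b : X) : Traj X N :=
  Fin.cons a (Fin.snoc v b)

/-- The bridge `q(x_in | x_0 = a, x_1 = b)`, as a function of the inner states. -/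
noncomputable def bridge (q : Traj X N → ℝ) (a b : X) (v : Fin N → X) : ℝ :=
  q (glue a v b) / endMarg q a b

/-- A process is Markov if it factorizes through its one-step transitions. -/
def IsMarkov (q : Traj X N → ℝ) : Prop :=
  ∀ ω : Traj X N,
    q ω = timeMarg q 0 (ω 0) * ∏ n : Fin (N + 1), transP q n (ω n.castSucc) (ω n.succ)

/-- A process `q` is reciprocal w.r.t. a full-support reference process `qref` if its
bridges coincide with those of `qref` wherever they are defined. -/
def IsReciprocal (qref q : Traj X N → ℝ) : Prop :=
  ∀ a b : X, 0 < endMarg q a b → ∀ v : Fin N → X, bridge q a b v = bridge qref a b v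

/-- Reciprocal projection of `q` w.r.t. `qref`:
`proj_R(q)(x_0, x_in, x_1) = qref(x_in | x_0, x_1) · q(x_0, x_1)`. -/
noncomputable def projR (qref q : Traj X N → ℝ) (ω : Traj X N) : ℝ :=
  (qref ω / endMarg qref (ω 0) (ω (Fin.last (N + 1)))) *
    endMarg q (ω 0) (ω (Fin.last (N + 1)))

/-- Markovian projection of `q`:
`proj_M(q)(x_0, x_in, x_1) = q(x_0) ∏_{n=1}^{N+1} q(x_{t_n} | x_{t_{n-1}})`. -/
noncomputable def projM (q : Traj X N → ℝ) (ω : Traj X N) : ℝ :=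
  timeMarg q 0 (ω 0) * ∏ n : Fin (N + 1), transP q n (ω n.castSucc) (ω n.succ)

/-- Marginal of the bridge of `q` at time index `i`:
`q(x_{t_i} = y | x_0 = a, x_1 = b)`. -/
noncomputable def bridgeAt (q : Traj X N → ℝ) (i : Fin (N + 2)) (y a b : X) : ℝ :=
  (∑ ω : Traj X N, if ω 0 = a ∧ ω i = y ∧ ω (Fin.last (N + 1)) = b then q ω else 0) /
    endMarg q a b

/-- Conditional transition given the terminal point:
`q(x_{t_n} = z | x_{t_{n-1}} = y, x_1 = b)` for the step from time index `n` to `n+1`. -/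
noncomputable def condTrans (q : Traj X N → ℝ) (n : Fin (N + 1)) (y z b : X) : ℝ :=
  (∑ ω : Traj X N,
      if ω n.castSucc = y ∧ ω n.succ = z ∧ ω (Fin.last (N + 1)) = b then q ω else 0) /
    (∑ ω : Traj X N, if ω n.castSucc = y ∧ ω (Fin.last (N + 1)) = b then q ω else 0)

/-- Membership in `Π_N(p_0, p_1)`: a process with prescribed marginals at times 0 and 1. -/
def InPiN (p0 p1 : X → ℝ) (q : Traj X N → ℝ) : Prop :=
  IsPMF q ∧ (∀ x, timeMarg q 0 x = p0 x) ∧ (∀ x, timeMarg q (Fin.last (N + 1)) x = p1 x)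

/-- Membership in `Π(p_0, p_1)`: couplings on `X²` with prescribed marginals. -/
def InPi2 (p0 p1 : X → ℝ) (s : X × X → ℝ) : Prop :=
  IsPMF s ∧ (∀ a, ∑ b, s (a, b) = p0 a) ∧ (∀ b, ∑ a, s (a, b) = p1 b)

/-!
Reciprocity says `q = w(x_0, x_1) · q^ref` with `w = q(x_0, x_1) / q^ref(x_0, x_1)`, so once the
endpoint `x_1 = b` is fixed, `q` is `q^ref` reweighted by a function of `x_0`, i.e. of the past of
time `t_{n-1}`. Under the Markov process `q^ref` past and future are conditionally independent given
the present: exchanging the futures of two trajectories that agree at time `t_{n-1}` leaves the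
product of their probabilities unchanged. Hence reweighting by a function of the past does not
change the law of `x_{t_n}` given `x_{t_{n-1}}` and `x_1`.
-/

section

variable {α : Type*} {n : ℕ}

lemma glue_init_tail (ω : Traj α n) :
    glue (ω 0) (Fin.init (Fin.tail ω)) (ω (Fin.last (n + 1))) = ω := by
  conv_rhs => rw [← Fin.cons_self_tail ω, ← Fin.snoc_init_self (Fin.tail ω)]
  rfl

def splice (m : Fin (n + 2)) (ω ω' : Fin (n + 2) → α) : Fin (n + 2) → α :=
  fun i => if i ≤ m then ω i else ω' i

variable {m i : Fin (n + 2)} {ω ω' : Fin (n + 2) → α}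

lemma splice_of_le (h : i ≤ m) : splice m ω ω' i = ω i := if_pos h

lemma splice_of_lt (h : m < i) : splice m ω ω' i = ω' i := if_neg (not_le.2 h)

lemma splice_involutive (m : Fin (n + 2)) :
    Function.Involutive fun p : (Fin (n + 2) → α) × (Fin (n + 2) → α) =>
      (splice m p.1 p.2, splice m p.2 p.1) := by
  intro p
  ext i <;> by_cases h : i ≤ m <;> simp [splice, h]

lemma splice_step (h : ω m = ω' m) (k : Fin (n + 1)) :
    (splice m ω ω' k.castSucc, splice m ω ω' k.succ) =
      if k.succ ≤ m then (ω k.castSucc, ω k.succ) else (ω' k.castSucc, ω' k.succ) := by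
  split_ifs with hk
  · rw [splice_of_le hk, splice_of_le (Fin.castSucc_lt_succ.le.trans hk)]
  · rw [not_le] at hk
    rw [splice_of_lt hk]
    obtain heq | hlt := (Fin.le_castSucc_iff.2 hk).eq_or_lt
    · rw [← heq, splice_of_le le_rfl, h]
    · rw [splice_of_lt hlt]

lemma prod_splice_mul_prod_splice (g : Fin (n + 1) → α → α → ℝ) (h : ω m = ω' m) :
    (∏ k, g k (splice m ω ω' k.castSucc) (splice m ω ω' k.succ)) *
        ∏ k, g k (splice m ω' ω k.castSucc) (splice m ω' ω k.succ) =
      (∏ k, g k (ω k.castSucc) (ω k.succ)) * ∏ k, g k (ω' k.castSucc) (ω' k.succ) := by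
  simp_rw [← Finset.prod_mul_distrib]
  refine Finset.prod_congr rfl fun k _ => ?_
  have h₁ := splice_step h k
  have h₂ := splice_step h.symm k
  split_ifs at h₁ h₂ <;> simp only [Prod.ext_iff] at h₁ h₂ <;> rw [h₁.1, h₁.2, h₂.1, h₂.2]
  ring

end

lemma IsMarkov.mul_splice {q : Traj X N → ℝ} (hq : IsMarkov q) {m : Fin (N + 2)}
    {ω ω' : Traj X N} (h : ω m = ω' m) :
    q (splice m ω ω') * q (splice m ω' ω) = q ω * q ω' := by
  rw [hq (splice m ω ω'), hq (splice m ω' ω), hq ω, hq ω', splice_of_le (Fin.zero_le m),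
    splice_of_le (Fin.zero_le m)]
  linear_combination (timeMarg q 0 (ω 0) * timeMarg q 0 (ω' 0)) *
    prod_splice_mul_prod_splice (transP q) h

/-- Past and future are conditionally independent given the present; `hP`, `hG₁`, `hG₂` say that
`P` depends only on the states up to time `m`, and `G₁`, `G₂` only on those after it. -/
lemma IsMarkov.sum_mul_sum_comm {q : Traj X N → ℝ} (hq : IsMarkov q) (m : Fin (N + 2)) (y : X)
    (P G₁ G₂ : Traj X N → ℝ) (hP : ∀ ω ω', P (splice m ω ω') = P ω)
    (hG₁ : ∀ ω ω', G₁ (splice m ω ω') = G₁ ω') (hG₂ : ∀ ω ω', G₂ (splice m ω ω') = G₂ ω') :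
    (∑ ω, if ω m = y then P ω * G₁ ω * q ω else 0) * (∑ ω, if ω m = y then G₂ ω * q ω else 0) =
      (∑ ω, if ω m = y then P ω * G₂ ω * q ω else 0) *
        ∑ ω, if ω m = y then G₁ ω * q ω else 0 := by
  simp_rw [Finset.sum_mul_sum, ← Fintype.sum_prod_type']
  rw [← Equiv.sum_comp (Function.Involutive.toPerm _ (splice_involutive m))]
  refine Finset.sum_congr rfl fun ⟨ω, ω'⟩ _ => ?_
  simp only [Function.Involutive.coe_toPerm, splice_of_le le_rfl, hP, hG₁, hG₂]
  by_cases hω : ω m = y <;> by_cases hω' : ω' m = y <;> simp only [hω, hω', if_true, if_false,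
    zero_mul, mul_zero]
  linear_combination (P ω * G₁ ω' * G₂ ω) * hq.mul_splice (hω.trans hω'.symm)

lemma sum_ite_eq_and_eq_pos {ι α : Type*} [Fintype ι] [DecidableEq ι] [Fintype α]
    [DecidableEq α] {q : (ι → α) → ℝ} (hq : ∀ ω, 0 < q ω) {i j : ι} (hij : i ≠ j) (a b : α) :
    0 < ∑ ω, if ω i = a ∧ ω j = b then q ω else 0 := by
  refine Finset.sum_pos' (fun ω _ => ?_) ⟨Function.update (fun _ => b) i a, Finset.mem_univ _, ?_⟩
  · split_ifs
    exacts [(hq ω).le, le_rfl]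
  · rw [if_pos ⟨Function.update_self .., Function.update_of_ne hij.symm ..⟩]
    exact hq _

lemma endMarg_pos {q : Traj X N → ℝ} (hq : ∀ ω, 0 < q ω) (a b : X) : 0 < endMarg q a b :=
  sum_ite_eq_and_eq_pos hq Fin.last_pos.ne a b

lemma IsReciprocal.apply_eq {qref q : Traj X N → ℝ} (hR : IsReciprocal qref q)
    (hq : ∀ a b, 0 < endMarg q a b) (hqref : ∀ a b, 0 < endMarg qref a b) (ω : Traj X N) :
    q ω = endMarg q (ω 0) (ω (Fin.last (N + 1))) / endMarg qref (ω 0) (ω (Fin.last (N + 1))) *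
      qref ω := by
  have h := hR (ω 0) (ω (Fin.last (N + 1))) (hq _ _) (Fin.init (Fin.tail ω))
  rw [bridge, bridge, glue_init_tail, div_eq_div_iff (hq _ _).ne' (hqref _ _).ne'] at h
  rw [div_mul_eq_mul_div, eq_div_iff (hqref _ _).ne']
  linarith

lemma IsMarkov.condTrans_endpoint_mul {q : Traj X N → ℝ} (hM : IsMarkov q) (hq : ∀ ω, 0 < q ω)
    (w : X → X → ℝ) (hw : ∀ a b, 0 < w a b) (n : Fin (N + 1)) (y z b : X) :
    condTrans (fun ω => w (ω 0) (ω (Fin.last (N + 1))) * q ω) n y z b = condTrans q n y z b := by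
  have hlast : n.castSucc < Fin.last (N + 1) := Fin.castSucc_lt_last n
  rw [condTrans, condTrans, div_eq_div_iff
    (sum_ite_eq_and_eq_pos (fun ω => mul_pos (hw _ _) (hq ω)) hlast.ne y b).ne'
    (sum_ite_eq_and_eq_pos hq hlast.ne y b).ne']
  convert (hM.sum_mul_sum_comm n.castSucc y (fun ω => w (ω 0) b)
    (fun ω => if ω n.succ = z ∧ ω (Fin.last (N + 1)) = b then 1 else 0)
    (fun ω => if ω (Fin.last (N + 1)) = b then 1 else 0)
    (fun ω ω' => by simp only [splice_of_le (Fin.zero_le _)])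
    (fun ω ω' => by simp only [splice_of_lt Fin.castSucc_lt_succ, splice_of_lt hlast])
    (fun ω ω' => by simp only [splice_of_lt hlast])).trans (mul_comm _ _) using 2 <;>
  refine Finset.sum_congr rfl fun ω _ => ?_ <;> split_ifs <;> simp_all

theorem reciprocal_cond_trans_general
    {X : Type*} [Fintype X] [DecidableEq X] {N : ℕ}
    (qref : Traj X N → ℝ) (hqrefpos : ∀ ω, 0 < qref ω)
    (hqrefM : IsMarkov qref)
    (q : Traj X N → ℝ) (hqR : IsReciprocal qref q)
    (hqend : ∀ a b : X, 0 < endMarg q a b) :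
    ∀ (n : Fin (N + 1)) (y z b : X),
      (∑ ω : Traj X N,
          if ω n.castSucc = y ∧ ω n.succ = z ∧ ω (Fin.last (N + 1)) = b then q ω else 0) /
        (∑ ω : Traj X N,
          if ω n.castSucc = y ∧ ω (Fin.last (N + 1)) = b then q ω else 0) =
      condTrans qref n y z b := by
  intro n y z b
  have hqrefend : ∀ a b, 0 < endMarg qref a b := endMarg_pos hqrefpos
  have hq : q = fun ω => endMarg q (ω 0) (ω (Fin.last (N + 1))) /
      endMarg qref (ω 0) (ω (Fin.last (N + 1))) * qref ω :=
    funext (hqR.apply_eq hqend hqrefend)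
  change condTrans q n y z b = _
  rw [hq]
  exact hqrefM.condTrans_endpoint_mul hqrefpos _ (fun a b => div_pos (hqend a b) (hqrefend a b))
    n y z b

/-- Conditional transitions of a reciprocal process match the reference
bridge. For `q` reciprocal w.r.t. the full-support Markov reference `q^ref`, with
full-support endpoint coupling, for every transition `n ∈ {1, …, N+1}` and states
`y, z, x_1`: `q(x_{t_n} = z | x_{t_{n-1}} = y, x_1) = q^ref(x_{t_n} = z | x_{t_{n-1}} = y, x_1)`
(with the conventions `x_{t_0} := x_0`, `x_{t_{N+1}} := x_1`). -/
theorem reciprocal_cond_trans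
    {X : Type*} [Fintype X] [DecidableEq X] [Nonempty X] {N : ℕ} (hN : 1 ≤ N)
    (qref : Traj X N → ℝ) (hqref : IsPMF qref) (hqrefpos : ∀ ω, 0 < qref ω)
    (hqrefM : IsMarkov qref)
    (q : Traj X N → ℝ) (hq : IsPMF q) (hqR : IsReciprocal qref q)
    (hqend : ∀ a b : X, 0 < endMarg q a b) :
    ∀ (n : Fin (N + 1)) (y z b : X),
      (∑ ω : Traj X N,
          if ω n.castSucc = y ∧ ω n.succ = z ∧ ω (Fin.last (N + 1)) = b then q ω else 0) /
        (∑ ω : Traj X N,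
          if ω n.castSucc = y ∧ ω (Fin.last (N + 1)) = b then q ω else 0) =
      condTrans qref n y z b :=
  reciprocal_cond_trans_general qref hqrefpos hqrefM q hqR hqend
end

section
/- Let X be a nonempty finite set, let p_0 and p_1 be probability mass functions on X with full support, and let q^ref be a probability mass function on X² with full support. Then the static Schrödinger Bridge problem min_{q ∈ Π(p_0, p_1)} KL( q || q^ref ) has a solution, and this solution is unique. -/
open Finset

variable {X : Type*} [Fintype X] [DecidableEq X] {N : ℕ}

/-! The couplings of `p₀` and `p₁` form a compact convex set, nonempty since it contains
`p₀ ⊗ p₁`. On it `q ↦ KL(q ‖ q^ref)` is continuous, and strictly convex because `q^ref` has full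
support: it is a sum of the strictly convex functions `x ↦ x log (x / c)`, `c > 0`. So a minimiser
exists, and a strictly convex function has at most one. -/

section Convexity

variable {ι : Type*} [Fintype ι] {E : ι → Type*} [∀ i, AddCommMonoid (E i)] [∀ i, Module ℝ (E i)]

theorem strictConvexOn_univ_pi_sum {s : ∀ i, Set (E i)} {f : ∀ i, E i → ℝ}
    (hf : ∀ i, StrictConvexOn ℝ (s i) (f i)) :
    StrictConvexOn ℝ (Set.univ.pi s) fun x => ∑ i, f i (x i) := by
  refine ⟨convex_pi fun i _ => (hf i).1, fun x hx y hy hxy a b ha hb hab => ?_⟩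
  obtain ⟨i, hi⟩ := Function.ne_iff.mp hxy
  simp only [Pi.add_apply, Pi.smul_apply, smul_eq_mul, mul_sum, ← sum_add_distrib]
  exact sum_lt_sum
    (fun j _ => (hf j).convexOn.2 (hx j trivial) (hy j trivial) ha.le hb.le hab)
    ⟨i, mem_univ i, (hf i).2 (hx i trivial) (hy i trivial) hi ha hb hab⟩

end Convexity

open Real in
theorem strictConvexOn_mul_log_div {c : ℝ} (hc : 0 < c) :
    StrictConvexOn ℝ (Set.Ici 0) fun x => x * log (x / c) := by
  have hsplit : (fun x => x * log (x / c)) = fun x => x * log x + (-log c) • x := by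
    funext x
    rcases eq_or_ne x 0 with rfl | hx
    · simp
    · rw [log_div hx hc.ne', smul_eq_mul]; ring
  rw [hsplit]
  exact strictConvexOn_mul_log.add_convexOn
    (((-log c) • LinearMap.id : ℝ →ₗ[ℝ] ℝ).convexOn (convex_Ici 0))

section KullbackLeibler

variable {Z : Type*} [Fintype Z]

open Real in
theorem continuous_KLd_left (b : Z → ℝ) : Continuous fun a : Z → ℝ => KLd a b := by
  refine continuous_finsetSum _ fun z _ => ?_
  rcases eq_or_ne (b z) 0 with hb | hb
  · simp only [hb, div_zero, log_zero, mul_zero]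
    exact continuous_const
  · have hscale : ∀ x : ℝ, x * log (x / b z) = b z * (x / b z * log (x / b z)) := fun x => by
      rw [← mul_assoc, mul_div_cancel₀ _ hb]
    simp only [hscale]
    fun_prop

theorem strictConvexOn_KLd_left {b : Z → ℝ} (hb : ∀ z, 0 < b z) :
    StrictConvexOn ℝ (Set.univ.pi fun _ => Set.Ici 0) fun a : Z → ℝ => KLd a b :=
  strictConvexOn_univ_pi_sum fun z => strictConvexOn_mul_log_div (hb z)

end KullbackLeibler

section Couplings

variable {α : Type*} [Fintype α] (p0 p1 : α → ℝ)

theorem isClosed_setOf_marginals :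
    IsClosed {s : α × α → ℝ | (∀ a, ∑ b, s (a, b) = p0 a) ∧ ∀ b, ∑ a, s (a, b) = p1 b} := by
  simp only [Set.ofPred_and, Set.ofPred_forall]
  exact (isClosed_iInter fun a => isClosed_eq (by fun_prop) continuous_const).inter
    (isClosed_iInter fun b => isClosed_eq (by fun_prop) continuous_const)

theorem isCompact_setOf_inPi2 : IsCompact {s | InPi2 p0 p1 s} :=
  (isCompact_stdSimplex ℝ (α × α)).inter_right (isClosed_setOf_marginals p0 p1)

theorem convex_setOf_inPi2 : Convex ℝ {s | InPi2 p0 p1 s} := by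
  rintro s ⟨hs, hs0, hs1⟩ t ⟨ht, ht0, ht1⟩ a b ha hb hab
  refine ⟨convex_stdSimplex ℝ _ hs ht ha hb hab, fun x => ?_, fun y => ?_⟩ <;>
    simp only [Pi.add_apply, Pi.smul_apply, smul_eq_mul, sum_add_distrib, ← mul_sum, hs0, ht0,
      hs1, ht1, ← add_mul, hab, one_mul]

theorem setOf_inPi2_subset_nonneg : {s | InPi2 p0 p1 s} ⊆ Set.univ.pi fun _ => Set.Ici 0 :=
  fun _ hs z _ => hs.1.1 z

variable {p0 p1}

theorem inPi2_mul (hp0 : IsPMF p0) (hp1 : IsPMF p1) : InPi2 p0 p1 fun z => p0 z.1 * p1 z.2 := by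
  refine ⟨⟨fun z => mul_nonneg (hp0.1 _) (hp1.1 _), ?_⟩, fun a => ?_, fun b => ?_⟩
  · rw [Fintype.sum_prod_type]
    simp only [← mul_sum, hp1.2, mul_one, hp0.2]
  · simp only [← mul_sum, hp1.2, mul_one]
  · simp only [← sum_mul, hp0.2, one_mul]

end Couplings

theorem static_sb_exists_unique_general
    {X : Type*} [Fintype X]
    (p0 p1 : X → ℝ) (hp0 : IsPMF p0)
    (hp1 : IsPMF p1)
    (qref : X × X → ℝ) (hqrefpos : ∀ p : X × X, 0 < qref p) :
    ∃! q : X × X → ℝ, InPi2 p0 p1 q ∧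
      ∀ q' : X × X → ℝ, InPi2 p0 p1 q' → KLd q qref ≤ KLd q' qref := by
  obtain ⟨q, hq, hmin⟩ := (isCompact_setOf_inPi2 p0 p1).exists_isMinOn
    ⟨_, inPi2_mul hp0 hp1⟩ (continuous_KLd_left qref).continuousOn
  refine ⟨q, ⟨hq, fun q' hq' => hmin hq'⟩, fun q' ⟨hq', hmin'⟩ => ?_⟩
  have hstrict := (strictConvexOn_KLd_left hqrefpos).subset
    (setOf_inPi2_subset_nonneg p0 p1) (convex_setOf_inPi2 p0 p1)
  exact hstrict.eq_of_isMinOn (fun r hr => hmin' r hr) hmin hq' hq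

/-- Existence and uniqueness of the static Schrödinger Bridge. For
full-support pmfs `p_0, p_1` on `X` and a full-support reference pmf `q^ref` on `X²`,
the problem `min_{q ∈ Π(p_0,p_1)} KL(q ‖ q^ref)` has a unique solution. -/
theorem static_sb_exists_unique
    {X : Type*} [Fintype X] [DecidableEq X] [Nonempty X]
    (p0 p1 : X → ℝ) (hp0 : IsPMF p0) (hp0pos : ∀ x, 0 < p0 x)
    (hp1 : IsPMF p1) (hp1pos : ∀ x, 0 < p1 x)
    (qref : X × X → ℝ) (hqref : IsPMF qref) (hqrefpos : ∀ p : X × X, 0 < qref p) :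
    ∃! q : X × X → ℝ, InPi2 p0 p1 q ∧
      ∀ q' : X × X → ℝ, InPi2 p0 p1 q' → KLd q qref ≤ KLd q' qref :=
  static_sb_exists_unique_general p0 p1 hp0 hp1 qref hqrefpos
end
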